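/- (Theorem 1, part 2) Let f_1, ..., f_m : ℝ^n → ℝ be convex and differentiable with L-Lipschitz continuous gradients (L > 0), g_1, ..., g_m : ℝ^n → ℝ be convex and continuous, F_i = f_i + g_i, and let the step size satisfy 0 < h ≤ 1/L. Let {θ^k} be the multiobjective proximal gradient sequence started at θ^0, i.e., θ^{k+1} = θ^k + d^k where d^k is a global minimizer of d ↦ ψ_{θ^k}(d) + (1/(2h))‖d‖_2^2 with ψ_θ(d) = max_{i=1,...,m} { ⟨∇f_i(θ), d⟩ + g_i(θ + d) − g_i(θ) }. If for some index j the sublevel set {θ ∈ ℝ^n : F_j(θ) ≤ F_j(θ^0)} is bounded, then the sequence {θ^k} has at least one accumulation point. -/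

import Mathlib

open RealInnerProductSpace Filter

/-- The function `ψ_θ` of the multiobjective proximal gradient subproblem:
`ψ_θ(d) = max_i { ⟨∇f_i(θ), d⟩ + g_i(θ + d) − g_i(θ) }`. -/
noncomputable def mpgPsi {n m : ℕ} [NeZero m]
    (f g : Fin m → EuclideanSpace ℝ (Fin n) → ℝ)
    (θ d : EuclideanSpace ℝ (Fin n)) : ℝ :=
  Finset.univ.sup' Finset.univ_nonempty
    fun i => ⟪gradient (f i) θ, d⟫ + g i (θ + d) - g i θ


lemma line_hasDerivAt {E : Type*} [NormedAddCommGroup E] [InnerProductSpace ℝ E] [CompleteSpace E]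
    (f : E → ℝ) (hf : Differentiable ℝ f) (θ d : E) (t : ℝ) :
    HasDerivAt (fun s : ℝ => f (θ + s • d)) ⟪gradient f (θ + t • d), d⟫ t := by
  have hline : HasDerivAt (fun s : ℝ => θ + s • d) d t := by
    simpa using ((hasDerivAt_id t).smul_const d).const_add θ
  have hgrad := (hf (θ + t • d)).hasGradientAt
  have hfd := hgrad.hasFDerivAt
  have := hfd.comp_hasDerivAt t hline
  simpa [InnerProductSpace.toDual_apply_apply, Function.comp_def] using this

lemma descent_lemma {E : Type*} [NormedAddCommGroup E] [InnerProductSpace ℝ E] [CompleteSpace E]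
    (f : E → ℝ) (hf : Differentiable ℝ f) (L : ℝ) (hL : 0 ≤ L)
    (hlip : ∀ x y, ‖gradient f x - gradient f y‖ ≤ L * ‖x - y‖) (θ d : E) :
    f (θ + d) ≤ f θ + ⟪gradient f θ, d⟫ + L / 2 * ‖d‖ ^ 2 := by
  set c : ℝ := ⟪gradient f θ, d⟫ with hc
  set r : ℝ → ℝ := fun t => f (θ + t • d) - t * c - L / 2 * t ^ 2 * ‖d‖ ^ 2 with hr
  have hder : ∀ t : ℝ, HasDerivAt r
      (⟪gradient f (θ + t • d), d⟫ - c - L * t * ‖d‖ ^ 2) t := by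
    intro t
    have h1 := line_hasDerivAt f hf θ d t
    have h2 : HasDerivAt (fun s : ℝ => s * c) c t := by
      simpa using (hasDerivAt_id t).mul_const c
    have h3 : HasDerivAt (fun s : ℝ => L / 2 * s ^ 2 * ‖d‖ ^ 2)
        (L * t * ‖d‖ ^ 2) t := by
      have : HasDerivAt (fun s : ℝ => s ^ 2) (2 * t) t := by
        simpa using hasDerivAt_pow 2 t
      have := ((this.const_mul (L / 2)).mul_const (‖d‖ ^ 2))
      exact this.congr_deriv (by ring)
    exact (h1.sub h2).sub h3
  have hnonpos : ∀ t ∈ Set.Icc (0 : ℝ) 1,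
      ⟪gradient f (θ + t • d), d⟫ - c - L * t * ‖d‖ ^ 2 ≤ 0 := by
    intro t ht
    have hcs : ⟪gradient f (θ + t • d) - gradient f θ, d⟫ ≤
        ‖gradient f (θ + t • d) - gradient f θ‖ * ‖d‖ := real_inner_le_norm _ _
    have hlipb := hlip (θ + t • d) θ
    have hnorm : ‖θ + t • d - θ‖ = t * ‖d‖ := by
      simp [norm_smul, abs_of_nonneg ht.1]
    rw [hnorm] at hlipb
    have : ⟪gradient f (θ + t • d), d⟫ - c ≤ L * (t * ‖d‖) * ‖d‖ := by
      calc ⟪gradient f (θ + t • d), d⟫ - c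
          = ⟪gradient f (θ + t • d) - gradient f θ, d⟫ := by
            rw [hc, inner_sub_left]
        _ ≤ ‖gradient f (θ + t • d) - gradient f θ‖ * ‖d‖ := hcs
        _ ≤ L * (t * ‖d‖) * ‖d‖ := by
            apply mul_le_mul_of_nonneg_right hlipb (norm_nonneg d)
    nlinarith [norm_nonneg d]
  have hanti : AntitoneOn r (Set.Icc (0 : ℝ) 1) := by
    apply antitoneOn_of_deriv_nonpos (convex_Icc 0 1)
    · exact fun t _ => ((hder t).continuousAt).continuousWithinAt
    · exact fun t _ => ((hder t).differentiableAt).differentiableWithinAt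
    · intro t ht
      rw [interior_Icc] at ht
      rw [(hder t).deriv]
      exact hnonpos t ⟨le_of_lt ht.1, le_of_lt ht.2⟩
  have := hanti (Set.left_mem_Icc.2 zero_le_one) (Set.right_mem_Icc.2 zero_le_one) zero_le_one
  simp only [hr] at this
  simp only [one_smul, zero_smul, add_zero, one_pow, zero_pow, mul_zero, zero_mul,
    mul_one, one_mul, sub_zero] at this
  linarith


/-- Theorem 1, part 2: if some objective `F_j = f_j + g_j` has a bounded sublevel set
at the initial value, the multiobjective proximal gradient sequence (with step size
`0 < h ≤ 1/L`) has at least one accumulation point. -/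
theorem mpg_sequence_has_accumulation_point
    {n m : ℕ} [NeZero m]
    (f g : Fin m → EuclideanSpace ℝ (Fin n) → ℝ)
    (hfconv : ∀ i, ConvexOn ℝ Set.univ (f i))
    (hf : ∀ i, Differentiable ℝ (f i)) (L : ℝ) (hL : 0 < L)
    (hlip : ∀ i, ∀ θ φ : EuclideanSpace ℝ (Fin n),
      ‖gradient (f i) θ - gradient (f i) φ‖ ≤ L * ‖θ - φ‖)
    (hg : ∀ i, ConvexOn ℝ Set.univ (g i)) (hgc : ∀ i, Continuous (g i))
    (h : ℝ) (hh : 0 < h) (hhL : h ≤ 1 / L)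
    (θ d : ℕ → EuclideanSpace ℝ (Fin n))
    (hstep : ∀ k, θ (k + 1) = θ k + d k)
    (hmin : ∀ k, ∀ e : EuclideanSpace ℝ (Fin n),
      mpgPsi f g (θ k) (d k) + (1 / (2 * h)) * ‖d k‖ ^ 2 ≤
        mpgPsi f g (θ k) e + (1 / (2 * h)) * ‖e‖ ^ 2)
    (j : Fin m)
    (hbdd : Bornology.IsBounded
      {φ : EuclideanSpace ℝ (Fin n) | f j φ + g j φ ≤ f j (θ 0) + g j (θ 0)}) :
    ∃ (θs : EuclideanSpace ℝ (Fin n)) (φ : ℕ → ℕ), StrictMono φ ∧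
      Tendsto (fun k => θ (φ k)) atTop (nhds θs) := by
  -- ψ at 0 is 0
  have hpsi0 : ∀ k, mpgPsi f g (θ k) 0 = 0 := by
    intro k
    unfold mpgPsi
    simp
  -- ψ(d k) ≤ -(1/(2h))‖d k‖²
  have hpsile : ∀ k, mpgPsi f g (θ k) (d k) + (1 / (2 * h)) * ‖d k‖ ^ 2 ≤ 0 := by
    intro k
    have := hmin k 0
    rw [hpsi0 k] at this
    simpa using this
  -- descent step for index j
  have hdesc : ∀ k, f j (θ (k + 1)) + g j (θ (k + 1)) ≤ f j (θ k) + g j (θ k) := by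
    intro k
    rw [hstep k]
    have h1 := descent_lemma (f j) (hf j) L hL.le (hlip j) (θ k) (d k)
    have h2 : ⟪gradient (f j) (θ k), d k⟫ + g j (θ k + d k) - g j (θ k) ≤
        mpgPsi f g (θ k) (d k) := by
      unfold mpgPsi
      exact Finset.le_sup'
        (fun i => ⟪gradient (f i) (θ k), d k⟫ + g i (θ k + d k) - g i (θ k))
        (Finset.mem_univ j)
    have h3 := hpsile k
    have hhL' : L ≤ 1 / h := by
      rw [le_div_iff₀ hh]
      rw [le_div_iff₀ hL] at hhL
      linarith [mul_comm L h]
    have hd2 : (0:ℝ) ≤ ‖d k‖ ^ 2 := by positivity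
    have key : L / 2 * ‖d k‖ ^ 2 ≤ 1 / (2 * h) * ‖d k‖ ^ 2 := by
      apply mul_le_mul_of_nonneg_right _ hd2
      rw [div_le_div_iff₀ two_pos (by positivity)]
      calc L * (2 * h) = 2 * (L * h) := by ring
        _ ≤ 2 * 1 := by
            have : L * h ≤ 1 := by
              rw [le_div_iff₀ hL] at hhL; linarith [mul_comm L h]
            linarith
        _ = 1 * 2 := by ring
    linarith
  -- monotone: F_j(θ k) ≤ F_j(θ 0)
  have hmono : ∀ k, f j (θ k) + g j (θ k) ≤ f j (θ 0) + g j (θ 0) := by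
    intro k
    induction k with
    | zero => exact le_refl _
    | succ k ih => exact le_trans (hdesc k) ih
  obtain ⟨a, _, φ, hφ, hconv⟩ := tendsto_subseq_of_bounded hbdd (x := θ) hmono
  exact ⟨a, φ, hφ, hconv⟩
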